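/- Forward invariance of the expanding cone for ε > 2/π: let ε > 2/π, let q, q' ∈ (−1/2, 1/2), and set α := 1 − πε/cos²(πq) and α' := 1 − πε/cos²(πq'). If a = (a₁, a₂) ∈ ℝ² with a₂ ≠ 0 and a₁/a₂ > α, then the image vector b = J_ε(q)·a = (a₂, −a₁ + 2α·a₂) satisfies b₂ ≠ 0 and α' < b₁/b₂ < 0. In particular the cone field {a : α < a₁/a₂ < 0} is mapped into itself along any orbit. -/

import Mathlib

/-! With `t = a₀ / a₁`, the image of `a` has slope `1 / (2α - t)`, and `2α - t < α ≤ 1 - πε < -1`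
because `cos² ≤ 1`. Hence the image slope lies in `(-1, 0)`, above every `α' < -1`. -/

open Real

/-- The Jacobian matrix of the map `T̃_ε` at a point with angle coordinate `q`. -/
noncomputable def Jmat (ε q : ℝ) : Matrix (Fin 2) (Fin 2) ℝ :=
  !![0, 1; -1, 2 - 2 * Real.pi * ε / (Real.cos (Real.pi * q))^2]

open Set Matrix

/-- The paper's `α`, the lower edge of the cone at `q`. -/
noncomputable def coneBound (ε q : ℝ) : ℝ :=
  1 - π * ε / cos (π * q) ^ 2

theorem Jmat_eq (ε q : ℝ) : Jmat ε q = !![0, 1; -1, 2 * coneBound ε q] := by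
  ext i j
  fin_cases i <;> fin_cases j <;> simp [Jmat, coneBound]
  ring

theorem coneBound_lt_neg_one {ε q : ℝ} (hε : 2 / π < ε) (hq : q ∈ Ioo (-(1:ℝ)/2) (1/2)) :
    coneBound ε q < -1 := by
  have hcos : 0 < cos (π * q) := by
    apply cos_pos_of_mem_Ioo
    constructor <;> nlinarith [pi_pos, hq.1, hq.2]
  have hπε : 2 < π * ε := by
    rwa [div_lt_iff₀ pi_pos, mul_comm] at hε
  have hdiv : π * ε ≤ π * ε / cos (π * q) ^ 2 :=
    le_div_self (by linarith) (by positivity) (pow_le_one₀ hcos.le (cos_le_one _))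
  unfold coneBound
  linarith

theorem slope_mulVec_mem_Ioo {α : ℝ} (hα : α ≤ -1) {a : Fin 2 → ℝ} (ha : a 1 ≠ 0)
    (hcone : α < a 0 / a 1) :
    (!![0, 1; -1, 2 * α] *ᵥ a) 1 ≠ 0 ∧
      (!![0, 1; -1, 2 * α] *ᵥ a) 0 / (!![0, 1; -1, 2 * α] *ᵥ a) 1 ∈ Ioo (-1) 0 := by
  set d := 2 * α - a 0 / a 1
  have hd : d < -1 := by linarith
  have hb0 : (!![0, 1; -1, 2 * α] *ᵥ a) 0 = a 1 := by
    simp [mulVec, dotProduct, Fin.sum_univ_two]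
  have hb1 : (!![0, 1; -1, 2 * α] *ᵥ a) 1 = a 1 * d := by
    simp only [d, mul_sub, mul_div_cancel₀ _ ha]
    simp [mulVec, dotProduct, Fin.sum_univ_two]
    ring
  have hslope : (!![0, 1; -1, 2 * α] *ᵥ a) 0 / (!![0, 1; -1, 2 * α] *ᵥ a) 1 = d⁻¹ := by
    rw [hb0, hb1, div_mul_cancel_left₀ ha]
  refine ⟨hb1 ▸ mul_ne_zero ha (by linarith), hslope ▸ ⟨?_, inv_lt_zero.mpr (by linarith)⟩⟩
  rw [lt_inv_of_neg (by norm_num) (by linarith)]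
  linarith

theorem stmt6 (ε : ℝ) (hε : 2 / Real.pi < ε) (q q' : ℝ)
    (hq : q ∈ Set.Ioo (-(1:ℝ)/2) (1/2)) (hq' : q' ∈ Set.Ioo (-(1:ℝ)/2) (1/2))
    (a : Fin 2 → ℝ) (ha : a 1 ≠ 0)
    (hcone : 1 - Real.pi * ε / (Real.cos (Real.pi * q))^2 < a 0 / a 1) :
    (Jmat ε q).mulVec a 1 ≠ 0 ∧
    1 - Real.pi * ε / (Real.cos (Real.pi * q'))^2 <
      (Jmat ε q).mulVec a 0 / (Jmat ε q).mulVec a 1 ∧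
    (Jmat ε q).mulVec a 0 / (Jmat ε q).mulVec a 1 < 0 := by
  obtain ⟨hne, hlow, hneg⟩ :=
    slope_mulVec_mem_Ioo (coneBound_lt_neg_one hε hq).le ha hcone
  rw [Jmat_eq]
  exact ⟨hne, (coneBound_lt_neg_one hε hq').trans hlow, hneg⟩
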